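/- arXiv:2012.06519 — 3 statements merged into one kernel-verified Lean document; each statement's English description precedes it below -/
import Mathlib

section
/- For any d ≥ 1 and real p > 1, the ℓ1 unit ball in ℝ^d is contained in the ℓq unit ball (where 1/p + 1/q = 1), and every point of the ℓq unit ball is within ℓq-distance 1 − d^(−1/p) of the ℓ1 unit ball; that is, B_q^d ⊆ B_1^d + (1 − d^(−1/p))·B_q^d. -/
/-!
Since every coordinate of a point of `B_1` has absolute value at most `1`, raising the
coordinates to the power `q ≥ 1` can only shrink them, so `B_1 ⊆ B_q`. Conversely, Hölder's
inequality against the constant vector `1` gives `‖x‖_1 ≤ d ^ (1/p) ‖x‖_q`, so for `x ∈ B_q`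
the point `d ^ (-1/p) • x` lies in `B_1`, and `x = d ^ (-1/p) • x + (1 - d ^ (-1/p)) • x`.
-/

open Finset Real

variable {ι : Type*} [Fintype ι]

lemma sum_abs_rpow_le_one_of_sum_abs_le_one {q : ℝ} (hq : 1 ≤ q) {x : ι → ℝ}
    (hx : ∑ i, |x i| ≤ 1) : ∑ i, |x i| ^ q ≤ 1 :=
  calc ∑ i, |x i| ^ q ≤ ∑ i, |x i| := sum_le_sum fun i _ ↦
        rpow_le_self_of_le_one (abs_nonneg _)
          ((single_le_sum (fun j _ ↦ abs_nonneg (x j)) (mem_univ i)).trans hx) hq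
    _ ≤ 1 := hx

lemma sum_abs_le_card_rpow_mul_sum_abs_rpow {p q : ℝ} (hpq : p.HolderConjugate q) (x : ι → ℝ) :
    ∑ i, |x i| ≤ (Fintype.card ι : ℝ) ^ (1 / p) * (∑ i, |x i| ^ q) ^ (1 / q) := by
  simpa using inner_le_Lp_mul_Lq univ (fun _ ↦ (1 : ℝ)) (fun i ↦ |x i|) hpq

lemma sum_abs_le_card_rpow_of_sum_abs_rpow_le_one {p q : ℝ} (hpq : p.HolderConjugate q)
    {x : ι → ℝ} (hx : ∑ i, |x i| ^ q ≤ 1) :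
    ∑ i, |x i| ≤ (Fintype.card ι : ℝ) ^ (1 / p) := by
  have hnorm : (∑ i, |x i| ^ q) ^ (1 / q) ≤ 1 :=
    rpow_le_one (sum_nonneg fun i _ ↦ by positivity) hx hpq.symm.one_div_nonneg
  calc ∑ i, |x i| ≤ (Fintype.card ι : ℝ) ^ (1 / p) * (∑ i, |x i| ^ q) ^ (1 / q) :=
        sum_abs_le_card_rpow_mul_sum_abs_rpow hpq x
    _ ≤ (Fintype.card ι : ℝ) ^ (1 / p) := mul_le_of_le_one_right (by positivity) hnorm

lemma sum_abs_card_rpow_neg_smul_le_one {p q : ℝ} (hpq : p.HolderConjugate q)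
    {x : ι → ℝ} (hx : ∑ i, |x i| ^ q ≤ 1) :
    ∑ i, |((Fintype.card ι : ℝ) ^ (-(1 / p)) • x) i| ≤ 1 := by
  have hcard : (0 : ℝ) ≤ Fintype.card ι := Nat.cast_nonneg _
  simp only [Pi.smul_apply, smul_eq_mul, abs_mul, ← mul_sum, rpow_neg hcard,
    abs_of_nonneg (inv_nonneg.2 (rpow_nonneg hcard _))]
  exact inv_mul_le_one_of_le₀ (sum_abs_le_card_rpow_of_sum_abs_rpow_le_one hpq hx)
    (rpow_nonneg hcard _)

theorem stmt_1_general (d : ℕ) (p q : ℝ) (hp : 1 < p)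
    (hpq : 1 / p + 1 / q = 1) :
    (∀ x : Fin d → ℝ, (∑ i, |x i|) ≤ 1 → (∑ i, |x i| ^ q) ≤ 1) ∧
    (∀ x : Fin d → ℝ, (∑ i, |x i| ^ q) ≤ 1 →
      ∃ a b : Fin d → ℝ, (∑ i, |a i|) ≤ 1 ∧ (∑ i, |b i| ^ q) ≤ 1 ∧
        x = a + (1 - (d : ℝ) ^ (-(1 / p))) • b) := by
  have hconj : p.HolderConjugate q := holderConjugate_iff.2 ⟨hp, by simpa using hpq⟩
  refine ⟨fun x hx ↦ sum_abs_rpow_le_one_of_sum_abs_le_one hconj.symm.lt.le hx,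
    fun x hx ↦ ⟨(d : ℝ) ^ (-(1 / p)) • x, x, ?_, hx, by rw [sub_smul, one_smul, add_sub_cancel]⟩⟩
  simpa using sum_abs_card_rpow_neg_smul_le_one hconj hx

theorem stmt_1 (d : ℕ) (hd : 1 ≤ d) (p q : ℝ) (hp : 1 < p) (hq : 1 < q)
    (hpq : 1 / p + 1 / q = 1) :
    (∀ x : Fin d → ℝ, (∑ i, |x i|) ≤ 1 → (∑ i, |x i| ^ q) ≤ 1) ∧
    (∀ x : Fin d → ℝ, (∑ i, |x i| ^ q) ≤ 1 →
      ∃ a b : Fin d → ℝ, (∑ i, |a i|) ≤ 1 ∧ (∑ i, |b i| ^ q) ≤ 1 ∧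
        x = a + (1 - (d : ℝ) ^ (-(1 / p))) • b) :=
  stmt_1_general d p q hp hpq
end

section
/- Let p ≥ 2, q ∈ (1,2] with 1/p + 1/q = 1, let a ∈ ℝ^d with ‖a‖_p ≤ 1, and let x ∈ ℝ^d with ‖x‖_q ≤ 1 have nonzero entries. Define a random index J with P(J = j) = |x_j|^q/‖x‖_q^q and V = a_J ‖x‖_q^q / (sign(x_J)|x_J|^(q−1)). Then E[|V|^p] = ‖a‖_p^p · ‖x‖_q^p ≤ 1. -/
/-!
Since `P(J = j) = |x_j|^q / S` with `S = ‖x‖_q^q`, the `j`-th term of `E|V|^p` is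
`|a_j|^p S^(p-1) |x_j|^(q - p(q-1))`, and `p(q-1) = q` makes the power of `|x_j|` vanish.
Hence `E|V|^p = ‖a‖_p^p S^(p-1)`, and `S^(p-1) = ‖x‖_q^p` because `p/q = p - 1`.
-/

open Real Finset

lemma Real.abs_sign_of_ne_zero {r : ℝ} (hr : r ≠ 0) : |Real.sign r| = 1 := by
  rcases Real.sign_apply_eq_of_ne_zero r hr with h | h <;> simp [h]

lemma Real.HolderConjugate.rpow_one_div_rpow {p q s : ℝ} (h : p.HolderConjugate q) (hs : 0 ≤ s) :
    (s ^ (1 / q)) ^ p = s ^ (p - 1) := by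
  rw [← rpow_mul hs, one_div_mul_eq_div, h.div_conj_eq_sub_one]

lemma rpow_div_mul_mul_div_rpow_sub_one {p q s t α : ℝ} (hpq : (q - 1) * p = q)
    (hs : 0 < s) (ht : 0 < t) (hα : 0 ≤ α) :
    t ^ q / s * (α * s / t ^ (q - 1)) ^ p = α ^ p * s ^ (p - 1) := by
  rw [div_rpow (by positivity) (by positivity), mul_rpow hα hs.le, ← rpow_mul ht.le, hpq,
    rpow_sub_one hs.ne']
  field_simp

lemma abs_div_sign_mul_abs_rpow {c r x : ℝ} (hx : x ≠ 0) :
    |c / (Real.sign x * |x| ^ r)| = |c| / |x| ^ r := by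
  rw [abs_div, abs_mul, Real.abs_sign_of_ne_zero hx, one_mul,
    abs_of_nonneg (rpow_nonneg (abs_nonneg x) r)]

/-- The `p`-th moment of the `ℓq`-sampling estimator of `⟪a, x⟫`. -/
theorem lq_sampling_moment {ι : Type*} [Fintype ι] {p q : ℝ} (hpq : p.HolderConjugate q)
    (a x : ι → ℝ) (hx : ∀ j, x j ≠ 0) :
    (∑ j, (|x j| ^ q / (∑ i, |x i| ^ q)) *
        |a j * (∑ i, |x i| ^ q) / (Real.sign (x j) * |x j| ^ (q - 1))| ^ p) =
      (∑ i, |a i| ^ p) * ((∑ i, |x i| ^ q) ^ (1 / q)) ^ p := by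
  set S := ∑ i, |x i| ^ q
  have hS : 0 ≤ S := sum_nonneg fun i _ => rpow_nonneg (abs_nonneg _) _
  rw [hpq.rpow_one_div_rpow hS, sum_mul]
  refine sum_congr rfl fun j _ => ?_
  have hxj : 0 < |x j| := abs_pos.mpr (hx j)
  have hSj : 0 < S :=
    (rpow_pos_of_pos hxj q).trans_le (single_le_sum (fun i _ => rpow_nonneg (abs_nonneg (x i)) q)
      (mem_univ j))
  rw [abs_div_sign_mul_abs_rpow (hx j), abs_mul, abs_of_pos hSj]
  exact rpow_div_mul_mul_div_rpow_sub_one hpq.symm.sub_one_mul_conj hSj hxj (abs_nonneg _)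

theorem stmt_4_general (d : ℕ) (p q : ℝ) (hq1 : 1 < q)
    (hpq : 1 / p + 1 / q = 1) (a x : Fin d → ℝ)
    (ha : (∑ i, |a i| ^ p) ≤ 1)
    (hxnorm : ((∑ i, |x i| ^ q) ^ (1 / q)) ≤ 1)
    (hxne : ∀ j, x j ≠ 0) :
    (∑ j, (|x j| ^ q / (∑ i, |x i| ^ q)) *
        |a j * (∑ i, |x i| ^ q) / (Real.sign (x j) * |x j| ^ (q - 1))| ^ p) =
      (∑ i, |a i| ^ p) * ((∑ i, |x i| ^ q) ^ ((1:ℝ) / q)) ^ p ∧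
    (∑ j, (|x j| ^ q / (∑ i, |x i| ^ q)) *
        |a j * (∑ i, |x i| ^ q) / (Real.sign (x j) * |x j| ^ (q - 1))| ^ p) ≤ 1 := by
  have hconj : p.HolderConjugate q :=
    (Real.holderConjugate_iff.mpr ⟨hq1, by simpa only [one_div, add_comm] using hpq⟩).symm
  rw [lq_sampling_moment hconj a x hxne]
  refine ⟨rfl, ?_⟩
  have hxnorm_p : ((∑ i, |x i| ^ q) ^ (1 / q)) ^ p ≤ 1 :=
    rpow_le_one (by positivity) hxnorm hconj.nonneg
  exact mul_le_one₀ ha (by positivity) hxnorm_p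

theorem stmt_4 (d : ℕ) (p q : ℝ) (hp : 2 ≤ p) (hq1 : 1 < q) (hq2 : q ≤ 2)
    (hpq : 1 / p + 1 / q = 1) (a x : Fin d → ℝ)
    (ha : (∑ i, |a i| ^ p) ≤ 1)
    (hxnorm : ((∑ i, |x i| ^ q) ^ (1 / q)) ≤ 1)
    (hxne : ∀ j, x j ≠ 0) :
    (∑ j, (|x j| ^ q / (∑ i, |x i| ^ q)) *
        |a j * (∑ i, |x i| ^ q) / (Real.sign (x j) * |x j| ^ (q - 1))| ^ p) =
      (∑ i, |a i| ^ p) * ((∑ i, |x i| ^ q) ^ ((1:ℝ) / q)) ^ p ∧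
    (∑ j, (|x j| ^ q / (∑ i, |x i| ^ q)) *
        |a j * (∑ i, |x i| ^ q) / (Real.sign (x j) * |x j| ^ (q - 1))| ^ p) ≤ 1 :=
  stmt_4_general d p q hq1 hpq a x ha hxnorm hxne
end

section
/- Let q ∈ (1,2], and in ℝ^d (d ≥ 2) fix an index l ∈ {2,…,d}. Define n ≥ 3 row vectors: A_1 = −2^(−1/p) e_1 + 2^(−1/p) e_l, and A_i = 2^(−1/p) e_1 + 2^(−1/p) e_l for all i ∈ {2,…,n}, where 1/p + 1/q = 1. Then max over x in the ℓq unit ball of min over i of A_i·x equals 2^(−1/p). -/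
/-! Every row puts weight `c = 2^(-1/p)` on `e_l`, and the rows differ only in the sign of
their `e_1` coefficient. The point `e_l` therefore scores `c` against every row, while for any
`x` in the unit ball one of the two rows `±c e_1 + c e_l` has `±x_1 ≤ 0` and scores at most
`c x_l ≤ c`. -/

open Finset

lemma abs_le_one_of_sum_abs_rpow_le_one {ι : Type*} [Fintype ι] {q : ℝ} (hq : 0 < q)
    {x : ι → ℝ} (hx : ∑ j, |x j| ^ q ≤ 1) (i : ι) : |x i| ≤ 1 := by
  have hi : |x i| ^ q ≤ 1 :=
    (single_le_sum (fun j _ => Real.rpow_nonneg (abs_nonneg (x j)) q) (mem_univ i)).trans hx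
  by_contra! h
  exact (Real.one_lt_rpow h hq).not_ge hi

lemma sum_abs_rpow_pi_single_one {ι : Type*} [Fintype ι] [DecidableEq ι] {q : ℝ} (hq : q ≠ 0)
    (i : ι) : ∑ j, |(Pi.single i 1 : ι → ℝ) j| ^ q = 1 := by
  simp [Pi.single_apply, apply_ite (fun t : ℝ => |t| ^ q), Real.zero_rpow hq]

lemma sum_ite_ite_mul {ι : Type*} [Fintype ι] [DecidableEq ι] {a b : ι} (hab : a ≠ b)
    (u v : ℝ) (x : ι → ℝ) :
    ∑ j, (if j = a then u else if j = b then v else 0) * x j = u * x a + v * x b := by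
  rw [Fintype.sum_eq_add a b hab (fun j hj => by simp [hj.1, hj.2])]
  simp [hab.symm]

theorem stmt_11 (d n : ℕ) (hd : 2 ≤ d) (hn : 3 ≤ n)
    (p q : ℝ) (hq1 : 1 < q)
    (l : Fin d) (hl : l ≠ ⟨0, by omega⟩)
    (A : Fin n → Fin d → ℝ)
    (hA0 : A ⟨0, by omega⟩ = fun j => if j = ⟨0, by omega⟩ then -((2:ℝ) ^ (-(1 / p)))
                          else if j = l then (2:ℝ) ^ (-(1 / p)) else 0)
    (hAi : ∀ i : Fin n, i ≠ ⟨0, by omega⟩ →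
      A i = fun j => if j = ⟨0, by omega⟩ ∨ j = l then (2:ℝ) ^ (-(1 / p)) else 0) :
    (∃ x : Fin d → ℝ, (∑ j, |x j| ^ q) ≤ 1 ∧
      ∀ i, (2:ℝ) ^ (-(1 / p)) ≤ ∑ j, A i j * x j) ∧
    (∀ x : Fin d → ℝ, (∑ j, |x j| ^ q) ≤ 1 →
      ∃ i, (∑ j, A i j * x j) ≤ (2:ℝ) ^ (-(1 / p))) := by
  set c : ℝ := (2:ℝ) ^ (-(1 / p))
  set j₀ : Fin d := ⟨0, by omega⟩
  have hc : 0 < c := by positivity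
  have hq : 0 < q := by linarith
  have hrow₀ : ∀ x : Fin d → ℝ,
      ∑ j, A ⟨0, by omega⟩ j * x j = -c * x j₀ + c * x l :=
    fun x => by rw [hA0]; exact sum_ite_ite_mul hl.symm _ _ x
  have hrow : ∀ i ≠ (⟨0, by omega⟩ : Fin n), ∀ x : Fin d → ℝ,
      ∑ j, A i j * x j = c * x j₀ + c * x l :=
    fun i hi x => by simp only [hAi i hi, ite_or]; exact sum_ite_ite_mul hl.symm _ _ x
  refine ⟨⟨Pi.single l 1, (sum_abs_rpow_pi_single_one hq.ne' l).le, fun i => ?_⟩,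
    fun x hx => ?_⟩
  · by_cases hi : i = ⟨0, by omega⟩
    · simp [hi, hrow₀, j₀, hl.symm]
    · simp [hrow i hi, j₀, hl.symm]
  · have hxl : x l ≤ 1 :=
      (le_abs_self _).trans (abs_le_one_of_sum_abs_rpow_le_one hq hx l)
    rcases le_or_gt 0 (x j₀) with h | h
    · exact ⟨_, by rw [hrow₀]; nlinarith⟩
    · exact ⟨⟨1, by omega⟩, by rw [hrow _ (by simp [Fin.ext_iff])]; nlinarith⟩
end
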